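/- Let X_t and X_{t'} be jointly distributed finite random vectors with n components each. Assume: (non-negativity) Un^(k)(V;Y|X) ≥ 0; (source data-processing inequality) Un^(k)(W;Y|X) ≤ Un^(k)(Z;Y|X) whenever W−Z−(X,Y) is a Markov chain; (self-unique identity) Un^(k)(X;Z|X) = Syn^(k)(X;Z) for any target Z; and that the downward-causation index 𝒟^(k) satisfies Σ_{α⊆[n],|α|=k} Syn^(k)(X_t;X_{t'}^α) ≥ 𝒟^(k)(X_t;X_{t'}) ≥ Syn^(k)(X_t;X_{t'}^β) for every β ⊆ [n] with |β| = k. Then the system admits supervenient features that exert downward causation of order k if and only if 𝒟^(k)(X_t;X_{t'}) > 0. -/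

import Mathlib

/-!
Framework: finite probability.  A finite sample space `Ω` carries a probability
mass function `μ : Ω → ℝ`; random variables are functions on `Ω`.
-/

noncomputable section

open scoped BigOperators

attribute [local instance] Classical.propDecidable

variable {Ω : Type} [Fintype Ω]

/-- The probability that the random variable `f` takes the value `a`, under the pmf `μ`. -/
def prEq (μ : Ω → ℝ) {A : Type} (f : Ω → A) (a : A) : ℝ :=
  ∑ ω, if f ω = a then μ ω else 0

/-- `μ` is a probability mass function on the finite sample space `Ω`. -/
def IsPMF (μ : Ω → ℝ) : Prop :=
  (∀ ω, 0 ≤ μ ω) ∧ ∑ ω, μ ω = 1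

/-- The Markov chain `f − g − h`: `f` and `h` are conditionally independent given `g`. -/
def MarkovChain (μ : Ω → ℝ) {A B C : Type} (f : Ω → A) (g : Ω → B) (h : Ω → C) : Prop :=
  ∀ a b c,
    prEq μ (fun ω => (f ω, g ω, h ω)) (a, b, c) * prEq μ g b =
      prEq μ (fun ω => (f ω, g ω)) (a, b) * prEq μ (fun ω => (g ω, h ω)) (b, c)

/-- Statistical independence of two random variables. -/
def IndepRV (μ : Ω → ℝ) {A B : Type} (f : Ω → A) (g : Ω → B) : Prop :=
  ∀ a b, prEq μ (fun ω => (f ω, g ω)) (a, b) = prEq μ f a * prEq μ g b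

/-- Shannon mutual information `I(f;g)`. -/
def mutInfo (μ : Ω → ℝ) {A B : Type} (f : Ω → A) (g : Ω → B) : ℝ :=
  ∑ a ∈ Finset.univ.image f, ∑ b ∈ Finset.univ.image g,
    prEq μ (fun ω => (f ω, g ω)) (a, b) *
      Real.log (prEq μ (fun ω => (f ω, g ω)) (a, b) / (prEq μ f a * prEq μ g b))

/-- Conditional mutual information `I(f;g|h)`. -/
def condMutInfo (μ : Ω → ℝ) {A B C : Type} (f : Ω → A) (g : Ω → B) (h : Ω → C) : ℝ :=
  ∑ a ∈ Finset.univ.image f, ∑ b ∈ Finset.univ.image g, ∑ c ∈ Finset.univ.image h,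
    prEq μ (fun ω => (f ω, g ω, h ω)) (a, b, c) *
      Real.log ((prEq μ h c * prEq μ (fun ω => (f ω, g ω, h ω)) (a, b, c)) /
        (prEq μ (fun ω => (f ω, h ω)) (a, c) * prEq μ (fun ω => (g ω, h ω)) (b, c)))

/-- Conditional entropy `H(f|g)`. -/
def condEntropyRV (μ : Ω → ℝ) {A B : Type} (f : Ω → A) (g : Ω → B) : ℝ :=
  -∑ a ∈ Finset.univ.image f, ∑ b ∈ Finset.univ.image g,
    prEq μ (fun ω => (f ω, g ω)) (a, b) *
      Real.log (prEq μ (fun ω => (f ω, g ω)) (a, b) / prEq μ g b)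

/-- The sub-vector `X^α` of the random vector `X`, for a set of indices `α ⊆ [n]`. -/
def subvec {n : ℕ} {𝓧 : Fin n → Type} (X : Ω → ∀ i, 𝓧 i) (α : Finset (Fin n)) :
    Ω → ∀ i : α, 𝓧 i :=
  fun ω i => X ω i

/-- The collection of all subsets of `[n]` of cardinality `k`. -/
def kSets (n k : ℕ) : Finset (Finset (Fin n)) :=
  Finset.univ.filter fun α => α.card = k

/-!
A supervenient feature `f` satisfies `f − X_t − (X_t, X_{t'}^α)`, so by the source
data-processing inequality its unique information about `X_{t'}^α` is at most that of `X_t`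
itself, which is `Syn(X_t; X_{t'}^α) ≤ 𝒟`. Conversely, if `𝒟 > 0` then some summand
`Syn(X_t; X_{t'}^α)` of the upper bound of `𝒟` is positive, and `X_t` is itself a supervenient
feature whose unique information about `X_{t'}^α` is exactly that synergy.
-/

lemma prEq_congr (μ : Ω → ℝ) {A B : Type} (f : Ω → A) (g : Ω → B) (a : A) (b : B)
    (h : ∀ ω, f ω = a ↔ g ω = b) : prEq μ f a = prEq μ g b :=
  Finset.sum_congr rfl fun ω _ => if_congr (h ω) rfl rfl

lemma prEq_eq_zero (μ : Ω → ℝ) {A : Type} (f : Ω → A) (a : A) (h : ∀ ω, f ω ≠ a) :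
    prEq μ f a = 0 :=
  Finset.sum_eq_zero fun ω _ => if_neg (h ω)

lemma prEq_map_right (μ : Ω → ℝ) {A C D : Type} (f : Ω → A) (h : Ω → C) (φ : C → D)
    (a : A) (d : D) :
    prEq μ (fun ω => (f ω, φ (h ω))) (a, d) =
      ∑ c ∈ Finset.univ.image h with φ c = d, prEq μ (fun ω => (f ω, h ω)) (a, c) := by
  unfold prEq
  rw [Finset.sum_comm]
  refine Finset.sum_congr rfl fun ω _ => ?_
  by_cases hf : f ω = a <;> simp [hf, Finset.sum_ite_eq]

lemma markovChain_self_left (μ : Ω → ℝ) {B C : Type} (g : Ω → B) (h : Ω → C) :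
    MarkovChain μ g g h := by
  intro b b' c
  by_cases hb : b = b'
  · subst hb
    rw [prEq_congr μ (fun ω => (g ω, g ω, h ω)) (fun ω => (g ω, h ω)) (b, b, c) (b, c)
        (fun ω => by simp only [Prod.mk.injEq]; tauto),
      prEq_congr μ (fun ω => (g ω, g ω)) g (b, b) b (fun ω => by simp only [Prod.mk.injEq]; tauto)]
    ring
  · rw [prEq_eq_zero μ (fun ω => (g ω, g ω, h ω)) (b, b', c)
        (fun ω hω => by simp only [Prod.mk.injEq] at hω; exact hb (hω.1 ▸ hω.2.1)),
      prEq_eq_zero μ (fun ω => (g ω, g ω)) (b, b')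
        (fun ω hω => by simp only [Prod.mk.injEq] at hω; exact hb (hω.1 ▸ hω.2)),
      zero_mul, zero_mul]

namespace MarkovChain

variable {μ : Ω → ℝ} {A B C : Type} {f : Ω → A} {g : Ω → B} {h : Ω → C}

lemma map_right {D : Type} (hM : MarkovChain μ f g h) (φ : C → D) :
    MarkovChain μ f g (fun ω => φ (h ω)) := by
  intro a b d
  rw [prEq_congr μ (fun ω => (f ω, g ω, φ (h ω))) (fun ω => ((f ω, g ω), φ (h ω)))
      (a, b, d) ((a, b), d) (fun ω => by simp only [Prod.mk.injEq, and_assoc]),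
    prEq_map_right μ (fun ω => (f ω, g ω)), prEq_map_right μ g, Finset.sum_mul, Finset.mul_sum]
  refine Finset.sum_congr rfl fun c _ => ?_
  rw [← hM a b c, prEq_congr μ (fun ω => ((f ω, g ω), h ω)) (fun ω => (f ω, g ω, h ω))
      ((a, b), c) (a, b, c) (fun ω => by simp only [Prod.mk.injEq, and_assoc])]

lemma adjoin_middle (hM : MarkovChain μ f g h) :
    MarkovChain μ f g (fun ω => (g ω, h ω)) := by
  rintro a b ⟨b', c⟩
  by_cases hb : b = b'
  · subst hb
    rw [prEq_congr μ (fun ω => (f ω, g ω, g ω, h ω)) (fun ω => (f ω, g ω, h ω))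
        (a, b, b, c) (a, b, c) (fun ω => by simp only [Prod.mk.injEq]; tauto),
      prEq_congr μ (fun ω => (g ω, g ω, h ω)) (fun ω => (g ω, h ω))
        (b, b, c) (b, c) (fun ω => by simp only [Prod.mk.injEq]; tauto)]
    exact hM a b c
  · rw [prEq_eq_zero μ (fun ω => (f ω, g ω, g ω, h ω)) (a, b, b', c)
        (fun ω hω => by simp only [Prod.mk.injEq] at hω; exact hb (hω.2.1 ▸ hω.2.2.1)),
      prEq_eq_zero μ (fun ω => (g ω, g ω, h ω)) (b, b', c)
        (fun ω hω => by simp only [Prod.mk.injEq] at hω; exact hb (hω.1 ▸ hω.2.1)),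
      zero_mul, mul_zero]

end MarkovChain

/-! `Un V f T t` encodes `Un⁽ᵏ⁾(f ; t | X_t)`, `Syn T t` encodes `Syn⁽ᵏ⁾(X_t ; t)` and `D` is
`𝒟⁽ᵏ⁾(X_t;X_{t'})`. -/
theorem downward_causation_iff_D_pos_general
    {Ω : Type} [Fintype Ω] (μ : Ω → ℝ)
    {n : ℕ} {𝓧 𝓨 : Fin n → Type} [∀ i, Fintype (𝓧 i)]
    (X : Ω → ∀ i, 𝓧 i) (X' : Ω → ∀ i, 𝓨 i)
    (k : ℕ)
    (Un : (V : Type) → (Ω → V) → (T : Type) → (Ω → T) → ℝ)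
    (Syn : (T : Type) → (Ω → T) → ℝ)
    (D : ℝ)
    (hUn_dpi : ∀ (W Z T : Type) (f : Ω → W) (g : Ω → Z) (t : Ω → T),
      MarkovChain μ f g (fun ω => (X ω, t ω)) → Un W f T t ≤ Un Z g T t)
    (hself : ∀ (T : Type) (t : Ω → T), Un (∀ i, 𝓧 i) X T t = Syn T t)
    (hD_ub : D ≤ ∑ α ∈ kSets n k, Syn (∀ i : α, 𝓨 i) (subvec X' α))
    (hD_lb : ∀ β ∈ kSets n k, Syn (∀ i : β, 𝓨 i) (subvec X' β) ≤ D) :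
    (∃ (V : Type) (_ : Fintype V) (f : Ω → V),
        MarkovChain μ f X X' ∧
          ∃ α ∈ kSets n k, 0 < Un V f (∀ i : α, 𝓨 i) (subvec X' α)) ↔ 0 < D := by
  constructor
  · rintro ⟨V, -, f, hsuper, α, hα, hUn⟩
    have hchain : MarkovChain μ f X (fun ω => (X ω, subvec X' α ω)) :=
      hsuper.adjoin_middle.map_right fun p => (p.1, fun i : α => p.2 i)
    calc 0 < Un V f _ (subvec X' α) := hUn
      _ ≤ Un _ X _ (subvec X' α) := hUn_dpi _ _ _ f X _ hchain
      _ = Syn _ (subvec X' α) := hself _ _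
      _ ≤ D := hD_lb α hα
  · intro hD
    obtain ⟨α, hα, hSyn⟩ : ∃ α ∈ kSets n k, 0 < Syn (∀ i : α, 𝓨 i) (subvec X' α) :=
      Finset.exists_lt_of_sum_lt (by simpa using hD.trans_le hD_ub)
    exact ⟨_, inferInstance, X, markovChain_self_left μ X X', α, hα, (hself _ _).trans_gt hSyn⟩

theorem downward_causation_iff_D_pos
    {Ω : Type} [Fintype Ω] (μ : Ω → ℝ) (hμ : IsPMF μ)
    {n : ℕ} {𝓧 𝓨 : Fin n → Type} [∀ i, Fintype (𝓧 i)] [∀ i, Fintype (𝓨 i)]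
    (X : Ω → ∀ i, 𝓧 i) (X' : Ω → ∀ i, 𝓨 i)
    (k : ℕ)
    (Un : (V : Type) → (Ω → V) → (T : Type) → (Ω → T) → ℝ)
    (Syn : (T : Type) → (Ω → T) → ℝ)
    (D : ℝ)
    (hUn_nonneg : ∀ (V : Type) (f : Ω → V) (T : Type) (t : Ω → T), 0 ≤ Un V f T t)
    (hUn_dpi : ∀ (W Z T : Type) (f : Ω → W) (g : Ω → Z) (t : Ω → T),
      MarkovChain μ f g (fun ω => (X ω, t ω)) → Un W f T t ≤ Un Z g T t)
    (hself : ∀ (T : Type) (t : Ω → T), Un (∀ i, 𝓧 i) X T t = Syn T t)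
    (hD_ub : D ≤ ∑ α ∈ kSets n k, Syn (∀ i : α, 𝓨 i) (subvec X' α))
    (hD_lb : ∀ β ∈ kSets n k, Syn (∀ i : β, 𝓨 i) (subvec X' β) ≤ D) :
    (∃ (V : Type) (_ : Fintype V) (f : Ω → V),
        MarkovChain μ f X X' ∧
          ∃ α ∈ kSets n k, 0 < Un V f (∀ i : α, 𝓨 i) (subvec X' α)) ↔ 0 < D :=
  downward_causation_iff_D_pos_general μ X X' k Un Syn D hUn_dpi hself hD_ub hD_lb
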